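/- arXiv:2410.04395 — 2 statements merged into one kernel-verified Lean document; each statement's English description precedes it below -/
import Mathlib

section
/- Let φ : ℝ → ℝ be a monotone decreasing nonnegative function such that for some constants δ > 0, C₀ > 0, s₀ ∈ ℝ, one has t·φ(s+t) ≤ C₀·φ(s)^(1+δ) for all s ≥ s₀ and all t > 0. Then φ(s) = 0 for every s ≥ s₀ + 2C₀φ(s₀)^δ/(1 − 2^(−δ)). -/
/-!
Put `K = φ s₀`. If `φ s ≤ M` then the hypothesis with `t = 2 C₀ M^δ` gives
`t φ(s + t) ≤ C₀ M^(1+δ) = t M / 2`, so `φ` drops to `M / 2` after a step of length `2 C₀ M^δ`.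
Starting from `s₀` with `M = K` and halving `M` each time, the step lengths are
`2 C₀ K^δ 2^(-δ n)`, whose sum is `2 C₀ K^δ / (1 - 2^(-δ))`; beyond that point `φ` is at most
`K / 2^n` for every `n`.
-/

open Finset Filter Topology

namespace DeGiorgi

variable {φ : ℝ → ℝ} {δ C₀ s₀ : ℝ}

lemma apply_add_le_half {s M : ℝ} (hδ : 0 < δ) (hC₀ : 0 < C₀) (hφs : 0 ≤ φ s) (hsM : φ s ≤ M)
    (hstep : ∀ t > 0, t * φ (s + t) ≤ C₀ * φ s ^ (1 + δ)) :
    φ (s + 2 * C₀ * M ^ δ) ≤ M / 2 := by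
  rcases (hφs.trans hsM).eq_or_lt with rfl | hM
  · simpa [Real.zero_rpow hδ.ne'] using hsM
  have ht : 0 < 2 * C₀ * M ^ δ := by positivity
  refine le_of_mul_le_mul_left ?_ ht
  calc 2 * C₀ * M ^ δ * φ (s + 2 * C₀ * M ^ δ) ≤ C₀ * φ s ^ (1 + δ) := hstep _ ht
    _ ≤ C₀ * M ^ (1 + δ) := by gcongr
    _ = 2 * C₀ * M ^ δ * (M / 2) := by rw [Real.rpow_add hM, Real.rpow_one]; ring

lemma rpow_div_two_pow {K : ℝ} (hK : 0 ≤ K) (n : ℕ) :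
    (K / 2 ^ n) ^ δ = K ^ δ * ((2 : ℝ) ^ (-δ)) ^ n := by
  rw [Real.div_rpow hK (by positivity), ← Real.rpow_pow_comm zero_le_two, Real.rpow_neg zero_le_two,
    inv_pow, div_eq_mul_inv]

lemma apply_add_sum_le_div_two_pow (hnonneg : ∀ s, 0 ≤ φ s) (hδ : 0 < δ) (hC₀ : 0 < C₀)
    (hiter : ∀ s ≥ s₀, ∀ t > 0, t * φ (s + t) ≤ C₀ * φ s ^ (1 + δ)) (n : ℕ) :
    φ (s₀ + ∑ k ∈ range n, 2 * C₀ * (φ s₀ / 2 ^ k) ^ δ) ≤ φ s₀ / 2 ^ n := by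
  induction n with
  | zero => simp
  | succ n ih =>
    have hs : s₀ ≤ s₀ + ∑ k ∈ range n, 2 * C₀ * (φ s₀ / 2 ^ k) ^ δ :=
      le_add_of_nonneg_right <| sum_nonneg fun k _ ↦ by
        have := hnonneg s₀; positivity
    rw [sum_range_succ, ← add_assoc, pow_succ, ← div_div]
    exact apply_add_le_half hδ hC₀ (hnonneg _) ih (hiter _ hs)

end DeGiorgi

/-- De Giorgi iteration lemma. -/
theorem deGiorgi_iteration (φ : ℝ → ℝ) (hanti : Antitone φ) (hnonneg : ∀ s, 0 ≤ φ s)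
    (δ C₀ s₀ : ℝ) (hδ : 0 < δ) (hC₀ : 0 < C₀)
    (hiter : ∀ s ≥ s₀, ∀ t > 0, t * φ (s + t) ≤ C₀ * φ s ^ (1 + δ)) :
    ∀ s ≥ s₀ + 2 * C₀ * φ s₀ ^ δ / (1 - 2 ^ (-δ)), φ s = 0 := by
  intro s hs
  have hr : (2 : ℝ) ^ (-δ) < 1 := Real.rpow_lt_one_of_one_lt_of_neg one_lt_two (neg_neg_of_pos hδ)
  have hsteps (n : ℕ) : s₀ + ∑ k ∈ range n, 2 * C₀ * (φ s₀ / 2 ^ k) ^ δ ≤ s := by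
    simp_rw [DeGiorgi.rpow_div_two_pow (hnonneg s₀), ← mul_assoc, ← mul_sum]
    rw [← mul_one_div] at hs
    refine le_trans ?_ hs
    have := hnonneg s₀
    gcongr
    simpa using geom_sum_Ico_le_of_lt_one (m := 0) (n := n) (by positivity) hr
  have hbound (n : ℕ) : φ s ≤ φ s₀ / 2 ^ n :=
    (hanti (hsteps n)).trans (DeGiorgi.apply_add_sum_le_div_two_pow hnonneg hδ hC₀ hiter n)
  have hlim : Tendsto (fun n : ℕ ↦ φ s₀ / 2 ^ n) atTop (𝓝 0) :=
    tendsto_const_nhds.div_atTop (tendsto_pow_atTop_atTop_of_one_lt one_lt_two)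
  exact (ge_of_tendsto' hlim hbound).antisymm (hnonneg s)
end

section
/- Let u : B₁ → ℝ be a C² function on the unit ball of ℝ^(2n) ≅ ℂⁿ. At any point where the full real Hessian ∇²u is negative semidefinite, one has |det(∇²u)| ≤ 2^(2n)·(det(−u_{ij̄}))², where (u_{ij̄}) is the complex Hessian. -/
/-!
Conjugating `M = -∇²u ≥ 0` by the matrix `T` whose columns are the Wirtinger vectors
`½(e_{x_j} + i e_{y_j})` and `½(i e_{x_j} + e_{y_j})` gives a positive semidefinite matrix
`Tᴴ M T` with diagonal blocks `K = (-u_{ij̄})` and `K̄`, and `det T = 2⁻ⁿ`. Fischer's inequality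
`det [[K, W], [Wᴴ, L]] ≤ det K · det L` (from the Schur complement and the monotonicity of `det`
on positive semidefinite matrices) then gives `4⁻ⁿ det M ≤ (det K)²`.
-/

open Matrix
open scoped ComplexOrder MatrixOrder

namespace Matrix

variable {𝕜 : Type*} [RCLike 𝕜] {n : Type*} [Fintype n] [DecidableEq n]

lemma PosSemidef.one_le_det_one_add {Q : Matrix n n 𝕜} (hQ : Q.PosSemidef) :
    1 ≤ (1 + Q).det := by
  have h := (PosSemidef.one.add hQ).isHermitian
  have hev (i : n) : 1 ≤ h.eigenvalues i := by
    have hmem : (h.eigenvalues i - 1) + 1 ∈ spectrum ℝ (algebraMap ℝ _ 1 + Q) := by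
      simpa using h.eigenvalues_mem_spectrum_real i
    linarith [spectrum_nonneg_of_nonneg hQ.nonneg (spectrum.add_mem_add_iff.mp hmem)]
  rw [h.det_eq_prod_eigenvalues, ← RCLike.ofReal_prod, ← RCLike.ofReal_one,
    RCLike.ofReal_le_ofReal]
  exact Finset.one_le_prod fun i _ ↦ hev i

lemma PosSemidef.det_le_det_add {A B : Matrix n n 𝕜} (hA : A.PosSemidef) (hB : B.PosSemidef) :
    A.det ≤ (A + B).det := by
  by_cases hA0 : A.det = 0
  · exact hA0 ▸ (hA.add hB).det_nonneg
  set S := CFC.sqrt A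
  have hSS : S * S = A := CFC.sqrt_mul_sqrt_self A hA.nonneg
  have hS : IsUnit S.det :=
    isUnit_iff_ne_zero.mpr fun h ↦ hA0 (by rw [← hSS, det_mul, h, zero_mul])
  have hSH : Sᴴ = S := (CFC.sqrt_nonneg A).posSemidef.isHermitian
  set Q := S⁻¹ * B * S⁻¹
  have hQ : Q.PosSemidef := by
    simpa [conjTranspose_nonsing_inv, hSH] using hB.conjTranspose_mul_mul_same S⁻¹
  have hAB : A + B = S * (1 + Q) * S := by
    rw [mul_add, add_mul, mul_one, hSS, ← mul_assoc, ← mul_assoc, mul_nonsing_inv _ hS, one_mul,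
      mul_assoc, nonsing_inv_mul _ hS, mul_one]
  calc A.det = A.det * 1 := (mul_one _).symm
    _ ≤ A.det * (1 + Q).det := mul_le_mul_of_nonneg_left hQ.one_le_det_one_add hA.det_nonneg
    _ = (A + B).det := by rw [hAB, det_mul, det_mul, ← hSS, det_mul]; ring

/-- **Fischer's inequality**. -/
lemma PosSemidef.det_le_det_toBlocks₁₁_mul_det_toBlocks₂₂ {m : Type*} [Fintype m]
    [DecidableEq m] {P : Matrix (n ⊕ m) (n ⊕ m) 𝕜} (hP : P.PosSemidef) :
    P.det ≤ P.toBlocks₁₁.det * P.toBlocks₂₂.det := by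
  have h₁₁ : P.toBlocks₁₁.PosSemidef := hP.submatrix Sum.inl
  by_cases hPd : P.PosDef
  swap
  · rw [hP.posDef_iff_det_ne_zero, not_not] at hPd
    exact hPd ▸ mul_nonneg h₁₁.det_nonneg (hP.submatrix Sum.inr).det_nonneg
  have hZ : P.toBlocks₁₁.PosDef := hPd.submatrix Sum.inl_injective
  have hblocks : P = fromBlocks P.toBlocks₁₁ P.toBlocks₁₂ P.toBlocks₁₂ᴴ P.toBlocks₂₂ := by
    conv_lhs => rw [← fromBlocks_toBlocks P]
    rw [(isHermitian_fromBlocks_iff.mp ((fromBlocks_toBlocks P).symm ▸ hP.isHermitian)).2.1]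
  set Z := P.toBlocks₁₁
  set W := P.toBlocks₁₂
  set Y := P.toBlocks₂₂
  have := hZ.isUnit.invertible
  have hSchur : (Y - Wᴴ * Z⁻¹ * W).PosSemidef := (PosDef.fromBlocks₁₁ W Y hZ).mp (hblocks ▸ hP)
  calc P.det = Z.det * (Y - Wᴴ * Z⁻¹ * W).det := by
        rw [hblocks, det_fromBlocks₁₁, invOf_eq_nonsing_inv]
    _ ≤ Z.det * Y.det := by
        refine mul_le_mul_of_nonneg_left ?_ h₁₁.det_nonneg
        simpa using hSchur.det_le_det_add (hZ.inv.posSemidef.conjTranspose_mul_mul_same W)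

lemma PosSemidef.map_ofReal {M : Matrix n n ℝ} (hM : M.PosSemidef) :
    (M.map (algebraMap ℝ 𝕜)).PosSemidef := by
  obtain ⟨B, rfl⟩ := CStarAlgebra.nonneg_iff_eq_star_mul_self.mp hM.nonneg
  rw [star_eq_conjTranspose, Matrix.map_mul, conjTranspose_map _ (fun _ ↦ by simp)]
  exact posSemidef_conjTranspose_mul_self _

end Matrix

variable {ι : Type*} [Fintype ι] [DecidableEq ι]

/-- `u_{ij̄} = ∂²u/∂z_i∂z̄_j` in terms of the real Hessian `M`, with `x_i ↔ Sum.inl i` and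
`y_i ↔ Sum.inr i`. -/
noncomputable def complexHessian (M : Matrix (ι ⊕ ι) (ι ⊕ ι) ℝ) : Matrix ι ι ℂ :=
  of fun i j ↦ (1 / 4 : ℂ) *
    (((M (.inl i) (.inl j) + M (.inr i) (.inr j) : ℝ) : ℂ) +
      Complex.I * ((M (.inl i) (.inr j) - M (.inr i) (.inl j) : ℝ) : ℂ))

noncomputable def wirtingerMatrix (ι : Type*) [DecidableEq ι] : Matrix (ι ⊕ ι) (ι ⊕ ι) ℂ :=
  (1 / 2 : ℂ) • fromBlocks 1 (Complex.I • 1) (Complex.I • 1) 1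

noncomputable def wirtingerConj (M : Matrix (ι ⊕ ι) (ι ⊕ ι) ℝ) : Matrix (ι ⊕ ι) (ι ⊕ ι) ℂ :=
  (wirtingerMatrix ι)ᴴ * M.map Complex.ofRealHom * wirtingerMatrix ι

lemma det_wirtingerMatrix : (wirtingerMatrix ι).det = 2⁻¹ ^ Fintype.card ι := by
  rw [wirtingerMatrix, det_smul, det_fromBlocks_one₁₁, smul_mul_smul_comm, Complex.I_mul_I,
    mul_one, neg_one_smul, sub_neg_eq_add, ← two_smul ℂ, det_smul, det_one, mul_one,
    Fintype.card_sum, ← two_mul, pow_mul, ← mul_pow]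
  norm_num

lemma det_wirtingerConj (M : Matrix (ι ⊕ ι) (ι ⊕ ι) ℝ) :
    (wirtingerConj M).det = ((4⁻¹ ^ Fintype.card ι * M.det : ℝ) : ℂ) := by
  rw [wirtingerConj, det_mul, det_mul, det_conjTranspose, det_wirtingerMatrix,
    ← RingHom.mapMatrix_apply, ← RingHom.map_det, star_pow, star_inv₀, star_ofNat,
    mul_right_comm, ← mul_pow, Complex.ofRealHom_eq_coe]
  push_cast
  norm_num

lemma posSemidef_wirtingerConj {M : Matrix (ι ⊕ ι) (ι ⊕ ι) ℝ} (hM : M.PosSemidef) :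
    (wirtingerConj M).PosSemidef :=
  hM.map_ofReal.conjTranspose_mul_mul_same _

lemma toBlocks₁₁_wirtingerConj (M : Matrix (ι ⊕ ι) (ι ⊕ ι) ℝ) :
    (wirtingerConj M).toBlocks₁₁ = complexHessian M := by
  ext i j
  simp only [toBlocks₁₁, wirtingerConj, wirtingerMatrix, one_div, fromBlocks, smul_of, mul_apply,
    conjTranspose_apply, of_apply, Pi.smul_apply, smul_eq_mul, star_mul', star_inv₀, star_ofNat,
    RCLike.star_def, map_apply, Complex.ofRealHom_eq_coe, Fintype.sum_sum_type, Sum.elim_inl,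
    one_apply, apply_ite (starRingEnd ℂ), map_one, map_zero, mul_ite, mul_one, mul_zero, ite_mul,
    zero_mul, Finset.sum_ite_eq', Finset.mem_univ, ↓reduceIte, Sum.elim_inr, Matrix.smul_apply,
    Complex.conj_I, mul_neg, neg_mul, complexHessian, Complex.ofReal_add, Complex.ofReal_sub]
  linear_combination (-(M (.inr i) (.inr j) : ℂ) / 4) * Complex.I_sq

lemma toBlocks₂₂_wirtingerConj (M : Matrix (ι ⊕ ι) (ι ⊕ ι) ℝ) :
    (wirtingerConj M).toBlocks₂₂ = (complexHessian M).map (starRingEnd ℂ) := by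
  ext i j
  simp only [toBlocks₂₂, wirtingerConj, wirtingerMatrix, one_div, fromBlocks, smul_of, mul_apply,
    conjTranspose_apply, of_apply, Pi.smul_apply, smul_eq_mul, star_mul', star_inv₀, star_ofNat,
    RCLike.star_def, map_apply, Complex.ofRealHom_eq_coe, Fintype.sum_sum_type, Sum.elim_inl,
    Sum.elim_inr, Matrix.smul_apply, one_apply, mul_ite, mul_one, mul_zero,
    apply_ite (starRingEnd ℂ), Complex.conj_I, map_zero, mul_neg, ite_mul, neg_mul, zero_mul,
    Finset.sum_ite_eq', Finset.mem_univ, ↓reduceIte, map_one, complexHessian, Complex.ofReal_add,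
    Complex.ofReal_sub, map_mul, map_inv₀, map_ofNat, map_add, Complex.conj_ofReal, map_sub]
  linear_combination (-(M (.inl i) (.inl j) : ℂ) / 4) * Complex.I_sq

theorem Matrix.PosSemidef.det_le_four_pow_mul_re_det_complexHessian_sq
    {M : Matrix (ι ⊕ ι) (ι ⊕ ι) ℝ} (hM : M.PosSemidef) :
    M.det ≤ 4 ^ Fintype.card ι * (complexHessian M).det.re ^ 2 := by
  have hN := posSemidef_wirtingerConj hM
  have hK : (complexHessian M).PosSemidef :=
    toBlocks₁₁_wirtingerConj M ▸ (hN.submatrix Sum.inl : (wirtingerConj M).toBlocks₁₁.PosSemidef)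
  obtain ⟨r, hr⟩ : ∃ r : ℝ, (complexHessian M).det = r :=
    ⟨_, Complex.eq_re_of_ofReal_le (r := 0) (by simpa using hK.det_nonneg)⟩
  have hfischer := hN.det_le_det_toBlocks₁₁_mul_det_toBlocks₂₂
  rw [toBlocks₁₁_wirtingerConj, toBlocks₂₂_wirtingerConj, ← RingHom.mapMatrix_apply,
    ← RingHom.map_det, det_wirtingerConj, hr, Complex.conj_ofReal, ← Complex.ofReal_mul,
    Complex.real_le_real] at hfischer
  rw [hr, Complex.ofReal_re, sq]
  rwa [inv_pow, inv_mul_le_iff₀ (by positivity)] at hfischer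

theorem real_det_le_complex_det_sq_general (n : ℕ)
    -- the real Hessian matrix of `u` at `x`
    (H : Matrix (Fin n ⊕ Fin n) (Fin n ⊕ Fin n) ℝ)
    -- the complex Hessian matrix `u_{ij̄} = ∂²u/∂z_i∂z̄_j` of `u` at `x`
    (C : Matrix (Fin n) (Fin n) ℂ)
    (hC : ∀ i j, C i j = (1 / 4 : ℂ) *
      (((H (Sum.inl i) (Sum.inl j) + H (Sum.inr i) (Sum.inr j) : ℝ) : ℂ) +
        Complex.I * ((H (Sum.inl i) (Sum.inr j) - H (Sum.inr i) (Sum.inl j) : ℝ) : ℂ)))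
    -- `∇²u ≤ 0` at `x`
    (hneg : (-H).PosSemidef) :
    |H.det| ≤ 2 ^ (2 * n) * ((-C).det.re) ^ 2 := by
  have hC' : -C = complexHessian (-H) := by
    ext i j
    simp only [Matrix.neg_apply, hC, complexHessian, of_apply, Complex.ofReal_neg,
      Complex.ofReal_add, Complex.ofReal_sub]
    ring
  have hdet : (-H).det = H.det := by
    rw [det_neg, Fintype.card_sum, ← two_mul, pow_mul]
    norm_num
  rw [← hdet, abs_of_nonneg hneg.det_nonneg, hC', pow_mul, show (2 : ℝ) ^ 2 = 4 by norm_num]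
  simpa only [Fintype.card_fin] using hneg.det_le_four_pow_mul_re_det_complexHessian_sq

/-- Pointwise comparison between the real Hessian determinant and the complex Hessian
determinant: identifying `ℂⁿ ≅ ℝ^(2n)` (real coordinates indexed by `Fin n ⊕ Fin n`,
`Sum.inl i ↔ x_i`, `Sum.inr i ↔ y_i`), for a `C²` function `u` on the unit ball, at a
point where the real Hessian `∇²u` is negative semidefinite, one has
`|det ∇²u| ≤ 2^(2n) (det(−u_{ij̄}))²`, with `u_{ij̄}` the complex Hessian. -/
theorem real_det_le_complex_det_sq (n : ℕ) (hn : 1 ≤ n)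
    (u : EuclideanSpace ℝ (Fin n ⊕ Fin n) → ℝ)
    (hu : ContDiffOn ℝ 2 u (Metric.ball 0 1))
    (x : EuclideanSpace ℝ (Fin n ⊕ Fin n)) (hx : x ∈ Metric.ball (0 : EuclideanSpace ℝ (Fin n ⊕ Fin n)) 1)
    -- the real Hessian matrix of `u` at `x`
    (H : Matrix (Fin n ⊕ Fin n) (Fin n ⊕ Fin n) ℝ)
    (hH : ∀ a b, H a b =
      iteratedFDeriv ℝ 2 u x ![EuclideanSpace.single a 1, EuclideanSpace.single b 1])
    -- the complex Hessian matrix `u_{ij̄} = ∂²u/∂z_i∂z̄_j` of `u` at `x`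
    (C : Matrix (Fin n) (Fin n) ℂ)
    (hC : ∀ i j, C i j = (1 / 4 : ℂ) *
      (((H (Sum.inl i) (Sum.inl j) + H (Sum.inr i) (Sum.inr j) : ℝ) : ℂ) +
        Complex.I * ((H (Sum.inl i) (Sum.inr j) - H (Sum.inr i) (Sum.inl j) : ℝ) : ℂ)))
    -- `∇²u ≤ 0` at `x`
    (hneg : (-H).PosSemidef) :
    |H.det| ≤ 2 ^ (2 * n) * ((-C).det.re) ^ 2 :=
  real_det_le_complex_det_sq_general n H C hC hneg
end
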